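/- arXiv:2006.06878 — 5 statements merged into one kernel-verified Lean document; each statement's English description precedes it below -/
import Mathlib

section
/- Let x_i, x_j, v, v' ∈ R^d with v, v' ≠ 0 and ||x_i||₂ ≤ 1, ||x_j||₂ ≤ 1. Then |⟨x_i^{v'⊥}, x_j^{v'⊥}⟩ - ⟨x_i^{v⊥}, x_j^{v⊥}⟩| ≤ 2||v'/||v'||₂ - v/||v||₂||₂. -/
/-!
Writing `u = v / ‖v‖` (which is `0` when `v = 0`), the Gram entry of the components orthogonal
to `v` is `⟪x, y⟫ - ⟪u, x⟫ ⟪u, y⟫`, so the difference to be bounded is a difference of products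
`⟪u, x⟫ ⟪u, y⟫ - ⟪u', x⟫ ⟪u', y⟫`; telescoping it and applying Cauchy–Schwarz to each term, with
all four vectors in the closed unit ball, gives the bound `2 ‖u' - u‖`.
-/

local notation "⟪" x ", " y "⟫" => @inner ℝ _ _ x y

noncomputable def projLine {d : ℕ} (v x : EuclideanSpace ℝ (Fin d)) :
    EuclideanSpace ℝ (Fin d) :=
  (⟪v, x⟫ / ‖v‖ ^ 2) • v

lemma inner_sub_projLine_sub_projLine {d : ℕ} (v x y : EuclideanSpace ℝ (Fin d)) :
    ⟪x - projLine v x, y - projLine v y⟫ = ⟪x, y⟫ - ⟪‖v‖⁻¹ • v, x⟫ * ⟪‖v‖⁻¹ • v, y⟫ := by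
  rcases eq_or_ne v 0 with rfl | hv
  · simp [projLine]
  have hvv : ⟪v, v⟫ = ‖v‖ ^ 2 := real_inner_self_eq_norm_sq v
  have hnorm : ‖v‖ ≠ 0 := norm_ne_zero_iff.mpr hv
  simp only [projLine, inner_sub_left, inner_sub_right, real_inner_smul_left,
    real_inner_smul_right, hvv, real_inner_comm x v, real_inner_comm y x]
  field_simp
  ring

lemma abs_mul_sub_mul_le (a b a' b' : ℝ) :
    |a * b - a' * b'| ≤ |a| * |b - b'| + |a - a'| * |b'| := by
  calc |a * b - a' * b'| = |a * (b - b') + (a - a') * b'| := by ring_nf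
    _ ≤ |a| * |b - b'| + |a - a'| * |b'| := by
      simpa only [abs_mul] using abs_add_le (a * (b - b')) ((a - a') * b')

section InnerProductSpace

variable {E : Type*} [NormedAddCommGroup E] [InnerProductSpace ℝ E]

lemma abs_real_inner_le_norm_of_norm_le_one (u : E) {x : E} (hx : ‖x‖ ≤ 1) :
    |⟪u, x⟫| ≤ ‖u‖ :=
  (abs_real_inner_le_norm u x).trans (mul_le_of_le_one_right (norm_nonneg u) hx)

lemma abs_inner_mul_inner_sub_inner_mul_inner_le {u u' x y : E} (hu : ‖u‖ ≤ 1) (hu' : ‖u'‖ ≤ 1)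
    (hx : ‖x‖ ≤ 1) (hy : ‖y‖ ≤ 1) :
    |⟪u, x⟫ * ⟪u, y⟫ - ⟪u', x⟫ * ⟪u', y⟫| ≤ 2 * ‖u' - u‖ := by
  have hux : |⟪u, x⟫| ≤ 1 := (abs_real_inner_le_norm_of_norm_le_one u hx).trans hu
  have hu'y : |⟪u', y⟫| ≤ 1 := (abs_real_inner_le_norm_of_norm_le_one u' hy).trans hu'
  have hdx : |⟪u, x⟫ - ⟪u', x⟫| ≤ ‖u' - u‖ := by
    rw [← inner_sub_left, norm_sub_rev]
    exact abs_real_inner_le_norm_of_norm_le_one _ hx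
  have hdy : |⟪u, y⟫ - ⟪u', y⟫| ≤ ‖u' - u‖ := by
    rw [← inner_sub_left, norm_sub_rev]
    exact abs_real_inner_le_norm_of_norm_le_one _ hy
  calc |⟪u, x⟫ * ⟪u, y⟫ - ⟪u', x⟫ * ⟪u', y⟫|
      ≤ |⟪u, x⟫| * |⟪u, y⟫ - ⟪u', y⟫| + |⟪u, x⟫ - ⟪u', x⟫| * |⟪u', y⟫| := abs_mul_sub_mul_le ..
    _ ≤ 1 * ‖u' - u‖ + ‖u' - u‖ * 1 := by gcongr
    _ = 2 * ‖u' - u‖ := by ring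

lemma norm_inv_norm_smul_le_one (v : E) : ‖‖v‖⁻¹ • v‖ ≤ 1 :=
  mem_closedBall_zero_iff.mp (inv_norm_smul_mem_unitClosedBall v)

end InnerProductSpace

theorem inner_projOrth_lipschitz_general {d : ℕ}
    (xi xj v v' : EuclideanSpace ℝ (Fin d))
    (hxi : ‖xi‖ ≤ 1) (hxj : ‖xj‖ ≤ 1) :
    |⟪xi - projLine v' xi, xj - projLine v' xj⟫ - ⟪xi - projLine v xi, xj - projLine v xj⟫|
      ≤ 2 * ‖(‖v'‖⁻¹ • v') - (‖v‖⁻¹ • v)‖ := by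
  rw [inner_sub_projLine_sub_projLine, inner_sub_projLine_sub_projLine, sub_sub_sub_cancel_left]
  exact abs_inner_mul_inner_sub_inner_mul_inner_le (norm_inv_norm_smul_le_one v)
    (norm_inv_norm_smul_le_one v') hxi hxj

/-- Lipschitz estimate for the inner product of orthogonal components:
`|⟨x_i^{v'⊥}, x_j^{v'⊥}⟩ - ⟨x_i^{v⊥}, x_j^{v⊥}⟩| ≤ 2‖v'/‖v'‖ - v/‖v‖‖`. -/
theorem inner_projOrth_lipschitz {d : ℕ}
    (xi xj v v' : EuclideanSpace ℝ (Fin d)) (hv : v ≠ 0) (hv' : v' ≠ 0)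
    (hxi : ‖xi‖ ≤ 1) (hxj : ‖xj‖ ≤ 1) :
    |⟪xi - projLine v' xi, xj - projLine v' xj⟫ - ⟪xi - projLine v xi, xj - projLine v xj⟫|
      ≤ 2 * ‖(‖v'‖⁻¹ • v') - (‖v‖⁻¹ • v)‖ :=
  inner_projOrth_lipschitz_general xi xj v v' hxi hxj
end

section
/- Let f : [0,T] → R^n be differentiable and y ∈ R^n, and suppose (d/dt)f(t) = −Λ(t)(f(t) − y) where Λ(t) is a symmetric positive semidefinite matrix with λ_min(Λ(t)) ≥ ω/2 for all t ∈ [0,T] and some ω > 0. Then ||f(t) − y||₂² ≤ exp(−ωt)·||f(0) − y||₂² for all t ∈ [0,T]. -/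
open Set
local notation "⟪" x ", " y "⟫" => @inner ℝ _ _ x y

/-!
Write `v t = f t - y`. Then `d/dt ‖v t‖² = -2 ⟪v t, Λ t (v t)⟫ ≤ -ω ‖v t‖²`, so `‖v t‖²` obeys the
differential inequality `g' ≤ -ω g`, and Grönwall's argument (the function `exp (ω t) g t` is
antitone) gives the exponential decay.
-/

theorem le_exp_neg_mul_of_hasDerivAt_le {g g' : ℝ → ℝ} {ω a b : ℝ}
    (hg : ∀ t ∈ Icc a b, HasDerivAt g (g' t) t) (hle : ∀ t ∈ Icc a b, g' t ≤ -ω * g t) :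
    ∀ t ∈ Icc a b, g t ≤ Real.exp (-ω * (t - a)) * g a := by
  set h : ℝ → ℝ := fun t => Real.exp (ω * t) * g t
  have hh : ∀ t ∈ Icc a b, HasDerivAt h (Real.exp (ω * t) * (ω * g t + g' t)) t := fun t ht => by
    have hexp := (hasDerivAt_id t).const_mul ω |>.exp
    simp only [id, mul_one] at hexp
    exact (hexp.mul (hg t ht)).congr_deriv (by ring)
  have hanti : AntitoneOn h (Icc a b) := by
    refine antitoneOn_of_hasDerivWithinAt_nonpos (convex_Icc a b)
      (fun t ht => (hh t ht).continuousAt.continuousWithinAt)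
      (fun t ht => (hh t (interior_subset ht)).hasDerivWithinAt) fun t ht => ?_
    have ht := interior_subset ht
    exact mul_nonpos_of_nonneg_of_nonpos (Real.exp_pos _).le (by linarith [hle t ht])
  intro t ht
  have hta : h t ≤ h a := hanti (left_mem_Icc.2 (ht.1.trans ht.2)) ht ht.1
  have hsplit : Real.exp (-ω * (t - a)) = Real.exp (ω * a) / Real.exp (ω * t) := by
    rw [← Real.exp_sub]
    ring_nf
  rw [hsplit, div_mul_eq_mul_div, le_div_iff₀' (Real.exp_pos _)]
  exact hta

theorem gradient_flow_linear_convergence_general {n : ℕ} (T ω : ℝ)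
    (f : ℝ → EuclideanSpace ℝ (Fin n)) (y : EuclideanSpace ℝ (Fin n))
    (Λ : ℝ → EuclideanSpace ℝ (Fin n) →L[ℝ] EuclideanSpace ℝ (Fin n))
    (hpsd : ∀ t ∈ Icc (0 : ℝ) T, ∀ x, (ω / 2) * ‖x‖ ^ 2 ≤ ⟪x, Λ t x⟫)
    (hderiv : ∀ t ∈ Icc (0 : ℝ) T, HasDerivAt f (-(Λ t (f t - y))) t) :
    ∀ t ∈ Icc (0 : ℝ) T, ‖f t - y‖ ^ 2 ≤ Real.exp (-ω * t) * ‖f 0 - y‖ ^ 2 := by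
  have hnorm_sq : ∀ t ∈ Icc (0 : ℝ) T, HasDerivAt (fun s => ‖f s - y‖ ^ 2)
      (2 * ⟪f t - y, -(Λ t (f t - y))⟫) t := fun t ht =>
    ((hderiv t ht).sub_const y).norm_sq
  have hdecay : ∀ t ∈ Icc (0 : ℝ) T,
      2 * ⟪f t - y, -(Λ t (f t - y))⟫ ≤ -ω * ‖f t - y‖ ^ 2 := fun t ht => by
    rw [inner_neg_right]
    linarith [hpsd t ht (f t - y)]
  intro t ht
  simpa only [sub_zero] using le_exp_neg_mul_of_hasDerivAt_le hnorm_sq hdecay t ht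

/-- Linear convergence of gradient flow under a uniformly positive definite NTK:
if `f'(t) = -Λ(t)(f(t) - y)` with `Λ(t)` symmetric PSD and `λ_min(Λ(t)) ≥ ω/2`, then
`‖f(t) - y‖² ≤ exp(-ωt)‖f(0) - y‖²` on `[0, T]`. -/
theorem gradient_flow_linear_convergence {n : ℕ} (T ω : ℝ) (hT : 0 ≤ T) (hω : 0 < ω)
    (f : ℝ → EuclideanSpace ℝ (Fin n)) (y : EuclideanSpace ℝ (Fin n))
    (Λ : ℝ → EuclideanSpace ℝ (Fin n) →L[ℝ] EuclideanSpace ℝ (Fin n))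
    (hsymm : ∀ t ∈ Icc (0 : ℝ) T, ∀ x z, ⟪Λ t x, z⟫ = ⟪x, Λ t z⟫)
    (hpsd : ∀ t ∈ Icc (0 : ℝ) T, ∀ x, (ω / 2) * ‖x‖ ^ 2 ≤ ⟪x, Λ t x⟫)
    (hderiv : ∀ t ∈ Icc (0 : ℝ) T, HasDerivAt f (-(Λ t (f t - y))) t) :
    ∀ t ∈ Icc (0 : ℝ) T, ‖f t - y‖ ^ 2 ≤ Real.exp (-ω * t) * ‖f 0 - y‖ ^ 2 :=
  gradient_flow_linear_convergence_general T ω f y Λ hpsd hderiv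
end

section
/- Let x₁, ..., x_n ∈ R^d with d ≥ 2, all nonzero, and pairwise non-parallel (x_i ≠ β·x_j for all i ≠ j and all β ∈ R \ {0}). Define for each i the functional φ_i : R^d \ {0} → R^d by φ_i(v) = (I − vv^T/||v||₂²)x_i · 1{⟨v, x_i⟩ ≥ 0}. Then φ₁, ..., φ_n are linearly independent as elements of L²(N(0, α²I); R^d), i.e., if ∑ c_i φ_i = 0 Lebesgue-almost everywhere then c₁ = ... = c_n = 0. -/
/-!
Fix `i`. As `d ≥ 2` and no `x j` with `j ≠ i` is parallel to `x i`, each hyperplane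
`{⟪v, x j⟫ = 0}` meets `(ℝ ∙ x i)ᗮ` in a proper subspace, and a real vector space is not a finite
union of proper subspaces: some `v₀ ≠ 0` is orthogonal to `x i` and to no other `x j`.
Each `φ j` is continuous off the hyperplane `{⟪v, x j⟫ = 0}`, so the combination, vanishing a.e.,
vanishes off the union of these hyperplanes. On the line `v₀ + t • x i` all terms but the `i`-th are
continuous at `t = 0`, while `φ i` jumps from `0` to `x i` there; hence `c i • x i = 0`.
-/

open MeasureTheory Filter Topology Module
local notation "⟪" x ", " y "⟫" => @inner ℝ _ _ x y

theorem Subspace.exists_ne_zero_forall_notMem {k V ι : Type*} [Field k] [Infinite k]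
    [AddCommGroup V] [Module k V] [Nontrivial V] [Finite ι] {p : ι → Subspace k V}
    (hp : ∀ i, p i ≠ ⊤) : ∃ v : V, v ≠ 0 ∧ ∀ i, v ∉ p i := by
  let q : Option ι → Subspace k V := fun o => o.elim ⊥ p
  have hq : ∀ o, q o ≠ ⊤ := by
    rintro (_ | i)
    exacts [bot_ne_top, hp i]
  obtain ⟨v, hv⟩ : ∃ v, v ∉ ⋃ o, (q o : Set V) := by
    by_contra! h
    obtain ⟨o, ho⟩ := Subspace.exists_eq_top_of_iUnion_eq_univ (Set.eq_univ_of_forall h)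
    exact hq o ho
  simp only [Set.mem_iUnion, not_exists] at hv
  exact ⟨v, by simpa [q] using hv none, fun i => hv (some i)⟩

theorem notMem_span_singleton_of_ne_smul {R M : Type*} [Semiring R] [AddCommMonoid M]
    [Module R M] {w y : M} (hy : y ≠ 0) (h : ∀ β : R, β ≠ 0 → y ≠ β • w) : y ∉ R ∙ w := by
  intro hmem
  obtain ⟨β, rfl⟩ := Submodule.mem_span_singleton.mp hmem
  exact h β (by rintro rfl; exact hy (zero_smul R w)) rfl

theorem eq_of_tendsto_nhdsLT_of_tendsto_nhdsGT {F : Type*} [TopologicalSpace F] [T2Space F]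
    {f g : ℝ → F} {x : ℝ} {a b : F} (hg : ContinuousAt g x) (hfg : f =ᶠ[𝓝[≠] x] g)
    (ha : Tendsto f (𝓝[<] x) (𝓝 a)) (hb : Tendsto f (𝓝[>] x) (𝓝 b)) : a = b := by
  have hlim : ∀ s ⊆ {x}ᶜ, (𝓝[s] x).NeBot → Tendsto f (𝓝[s] x) (𝓝 (g x)) := fun s hs _ =>
    (hg.tendsto.mono_left nhdsWithin_le_nhds).congr' (hfg.filter_mono (nhdsWithin_mono x hs)).symm
  exact (tendsto_nhds_unique ha (hlim _ (fun _ h => ne_of_lt h) inferInstance)).trans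
    (tendsto_nhds_unique hb (hlim _ (fun _ h => ne_of_gt h) inferInstance)).symm

section InnerProductSpace

variable {E : Type*} [NormedAddCommGroup E] [InnerProductSpace ℝ E]

theorem exists_ne_zero_inner_eq_zero_forall_inner_ne_zero [FiniteDimensional ℝ E]
    (hE : 2 ≤ finrank ℝ E) {ι : Type*} [Finite ι] (w : E) (y : ι → E)
    (hy : ∀ j, y j ∉ ℝ ∙ w) : ∃ v : E, v ≠ 0 ∧ ⟪v, w⟫ = 0 ∧ ∀ j, ⟪v, y j⟫ ≠ 0 := by
  let W := (ℝ ∙ w)ᗮ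
  have : Nontrivial W := by
    refine Module.nontrivial_of_finrank_pos (R := ℝ) (?_ : 0 < finrank ℝ (ℝ ∙ w)ᗮ)
    have := (ℝ ∙ w).finrank_add_finrank_orthogonal
    have : finrank ℝ (ℝ ∙ w) ≤ 1 := by simpa using finrank_span_le_card ({w} : Set E)
    omega
  have hproper : ∀ j, (ℝ ∙ y j)ᗮ.comap W.subtype ≠ ⊤ := by
    intro j h
    rw [Submodule.comap_subtype_eq_top] at h
    have := Submodule.orthogonal_le h
      (Submodule.le_orthogonal_orthogonal _ (Submodule.mem_span_singleton_self (y j)))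
    exact hy j (by rwa [Submodule.orthogonal_orthogonal] at this)
  obtain ⟨v, hv0, hv⟩ := Subspace.exists_ne_zero_forall_notMem hproper
  refine ⟨v, by simpa using hv0, Submodule.mem_orthogonal_singleton_iff_inner_left.mp v.2,
    fun j => ?_⟩
  simpa [Submodule.mem_orthogonal_singleton_iff_inner_left] using hv j

/-- The paper's `φ_i` is `gatedOrthProj (x i)`. -/
noncomputable def gatedOrthProj (w v : E) : E :=
  if 0 ≤ ⟪v, w⟫ then w - (⟪v, w⟫ / ‖v‖ ^ 2) • v else 0

theorem continuousAt_sub_inner_div_norm_sq_smul (w : E) {v : E} (hv : v ≠ 0) :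
    ContinuousAt (fun u : E => w - (⟪u, w⟫ / ‖u‖ ^ 2) • u) v := by
  have : ‖v‖ ^ 2 ≠ 0 := by positivity
  fun_prop (disch := assumption)

theorem continuousAt_gatedOrthProj {w v : E} (h : ⟪v, w⟫ ≠ 0) :
    ContinuousAt (gatedOrthProj w) v := by
  have hv : v ≠ 0 := by rintro rfl; simp at h
  have hinner : ContinuousAt (fun u : E => ⟪u, w⟫) v := by fun_prop
  rcases h.lt_or_gt with h | h
  · refine continuousAt_const.congr (f := fun _ => (0 : E)) ?_
    filter_upwards [hinner.eventually_lt continuousAt_const h] with u hu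
    simp [gatedOrthProj, not_le.mpr hu]
  · refine (continuousAt_sub_inner_div_norm_sq_smul w hv).congr ?_
    filter_upwards [continuousAt_const.eventually_lt hinner h] with u hu
    simp [gatedOrthProj, hu.le]

theorem continuousAt_sum_smul_gatedOrthProj {ι : Type*} [Fintype ι] {y : ι → E} (a : ι → ℝ)
    {v : E} (h : ∀ j, ⟪v, y j⟫ ≠ 0) :
    ContinuousAt (fun u => ∑ j, a j • gatedOrthProj (y j) u) v :=
  tendsto_finsetSum _ fun j _ => (continuousAt_gatedOrthProj (h j)).const_smul (a j)

theorem inner_add_smul_self_of_inner_eq_zero {v w : E} (h : ⟪v, w⟫ = 0) (t : ℝ) :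
    ⟪v + t • w, w⟫ = t * ‖w‖ ^ 2 := by
  rw [inner_add_left, real_inner_smul_left, h, real_inner_self_eq_norm_sq, zero_add]

theorem tendsto_gatedOrthProj_nhdsLT {v w : E} (hw : w ≠ 0) (h : ⟪v, w⟫ = 0) :
    Tendsto (fun t : ℝ => gatedOrthProj w (v + t • w)) (𝓝[<] 0) (𝓝 0) := by
  refine tendsto_const_nhds.congr' ?_
  filter_upwards [self_mem_nhdsWithin] with t (ht : t < 0)
  have : t * ‖w‖ ^ 2 < 0 := mul_neg_of_neg_of_pos ht (by positivity)
  simp [gatedOrthProj, inner_add_smul_self_of_inner_eq_zero h, not_le.mpr this]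

theorem tendsto_gatedOrthProj_nhdsGT {v w : E} (hv : v ≠ 0) (h : ⟪v, w⟫ = 0) :
    Tendsto (fun t : ℝ => gatedOrthProj w (v + t • w)) (𝓝[>] 0) (𝓝 w) := by
  have hcont : ContinuousAt (fun t : ℝ => w - (⟪v + t • w, w⟫ / ‖v + t • w‖ ^ 2) • (v + t • w)) 0 :=
    (continuousAt_sub_inner_div_norm_sq_smul w hv).comp_of_eq (by fun_prop) (by simp)
  have hlim := hcont.tendsto
  simp only [zero_smul, add_zero, h, zero_div, sub_zero] at hlim
  refine (hlim.mono_left nhdsWithin_le_nhds).congr' ?_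
  filter_upwards [self_mem_nhdsWithin] with t (ht : 0 < t)
  have : 0 ≤ t * ‖w‖ ^ 2 := by positivity
  simp [gatedOrthProj, inner_add_smul_self_of_inner_eq_zero h, this]

theorem eq_zero_of_ae_smul_gatedOrthProj_add_sum_eq_zero [MeasurableSpace E] {μ : Measure E}
    [μ.IsOpenPosMeasure] {ι : Type*} [Fintype ι] {w v₀ : E} {y : ι → E} {a : ι → ℝ} {b : ℝ}
    (hw : w ≠ 0) (hv₀ : v₀ ≠ 0) (hv₀w : ⟪v₀, w⟫ = 0) (hv₀y : ∀ j, ⟪v₀, y j⟫ ≠ 0)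
    (h : ∀ᵐ v ∂μ, b • gatedOrthProj w v + ∑ j, a j • gatedOrthProj (y j) v = 0) : b = 0 := by
  let G v := ∑ j, a j • gatedOrthProj (y j) v
  let U := {v : E | ⟪v, w⟫ ≠ 0} ∩ ⋂ j, {v | ⟪v, y j⟫ ≠ 0}
  have hU : IsOpen U := (isOpen_ne_fun (by fun_prop) (by fun_prop)).inter
    (isOpen_iInter_of_finite fun j => isOpen_ne_fun (by fun_prop) (by fun_prop))
  have hzero : Set.EqOn (fun v => b • gatedOrthProj w v + G v) 0 U :=
    Measure.eqOn_open_of_ae_eq (ae_restrict_of_ae h) hU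
      (continuousOn_of_forall_continuousAt fun v hv =>
        ((continuousAt_gatedOrthProj hv.1).const_smul b).add
          (continuousAt_sum_smul_gatedOrthProj a (Set.mem_iInter.mp hv.2)))
      continuousOn_const
  have hline : ∀ᶠ t in 𝓝[≠] (0 : ℝ), v₀ + t • w ∈ U := by
    refine (eventually_mem_nhdsWithin.mono fun t ht => ?_).and (nhdsWithin_le_nhds ?_)
    · rw [Set.mem_ofPred_eq, inner_add_smul_self_of_inner_eq_zero hv₀w]
      exact mul_ne_zero ht (by positivity)
    · simp only [Set.mem_iInter, Set.mem_ofPred_eq]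
      refine eventually_all.mpr fun j => ContinuousAt.eventually_ne ?_ (by simpa using hv₀y j)
      fun_prop
  have hjump : (fun t : ℝ => b • gatedOrthProj w (v₀ + t • w)) =ᶠ[𝓝[≠] 0]
      fun t => -G (v₀ + t • w) := by
    filter_upwards [hline] with t ht
    exact eq_neg_of_add_eq_zero_left (hzero ht)
  have hG : ContinuousAt (fun t : ℝ => G (v₀ + t • w)) 0 :=
    (continuousAt_sum_smul_gatedOrthProj a hv₀y).comp_of_eq (by fun_prop) (by simp)
  have hbw := eq_of_tendsto_nhdsLT_of_tendsto_nhdsGT hG.neg hjump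
    ((tendsto_gatedOrthProj_nhdsLT hw hv₀w).const_smul b)
    ((tendsto_gatedOrthProj_nhdsGT hv₀ hv₀w).const_smul b)
  simpa [hw] using hbw.symm

end InnerProductSpace

/-- Linear independence (almost everywhere) of the functionals
`φ_i(v) = (I - vvᵀ/‖v‖²) x_i · 1{⟨v, x_i⟩ ≥ 0}` associated to nonzero, pairwise
non-parallel data points: if a linear combination vanishes Lebesgue-almost everywhere,
all coefficients are zero. -/
theorem phi_linearly_independent {d n : ℕ} (hd : 2 ≤ d)
    (x : Fin n → EuclideanSpace ℝ (Fin d))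
    (hx : ∀ i, x i ≠ 0)
    (hpar : ∀ i j, i ≠ j → ∀ β : ℝ, β ≠ 0 → x i ≠ β • x j)
    (c : Fin n → ℝ)
    (hzero : ∀ᵐ v : EuclideanSpace ℝ (Fin d) ∂volume,
      ∑ i : Fin n, c i •
        (if 0 ≤ ⟪v, x i⟫ then x i - (⟪v, x i⟫ / ‖v‖ ^ 2) • v else 0) = 0) :
    ∀ i, c i = 0 := by
  intro i
  obtain ⟨v₀, hv₀, hv₀i, hv₀j⟩ := exists_ne_zero_inner_eq_zero_forall_inner_ne_zero
    (by simpa using hd) (x i) (fun j : {j // j ≠ i} => x j)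
    fun j => notMem_span_singleton_of_ne_smul (hx j) (hpar j i j.2)
  refine eq_zero_of_ae_smul_gatedOrthProj_add_sum_eq_zero (μ := volume)
    (a := fun j : {j // j ≠ i} => c j) (hx i) hv₀ hv₀i hv₀j ?_
  filter_upwards [hzero] with v hv
  rwa [Fintype.sum_eq_add_sum_subtype_ne _ i] at hv
end

section
/- Let x₁, ..., x_n ∈ R^d with d ≥ 2, all nonzero, and pairwise non-parallel. Define θ_i : R^d \ {0} → R by θ_i(v) = σ(⟨v, x_i⟩/||v||₂) where σ is the ReLU. If ∑_{i=1}^n c_i θ_i(v) = 0 for all v ≠ 0, then c₁ = ... = c_n = 0. -/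
local notation "⟪" x ", " y "⟫" => @inner ℝ _ _ x y

/-!
Since `σ(s) + σ(-s) = |s|`, adding the identity at `v` and at `-v` gives `∑ cⱼ |⟪v, xⱼ⟫| = 0`
for every `v`. Fix `i`. As no `xⱼ` with `j ≠ i` lies on the line `ℝ xᵢ`, the hyperplane `xᵢᗮ` is
not covered by the finitely many proper subspaces `xᵢᗮ ∩ xⱼᗮ`, so some `v ⊥ xᵢ` has `⟪v, xⱼ⟫ ≠ 0`
for all `j ≠ i`. Along the line `t ↦ v + t • xᵢ` the terms with `j ≠ i` are affine in `t` near `0`,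
while the `i`-th one is `cᵢ |t| ‖xᵢ‖²`; this kink forces `cᵢ = 0`.
-/

open Finset Filter Topology

theorem Submodule.exists_mem_forall_notMem_of_forall_not_le {k E ι : Type*} [Field k] [Infinite k]
    [AddCommGroup E] [Module k E] [Finite ι] {K : Submodule k E} {p : ι → Submodule k E}
    (hp : ∀ j, ¬K ≤ p j) : ∃ v ∈ K, ∀ j, v ∉ p j := by
  have hcover : ⋃ j, ((p j).comap K.subtype : Set K) ≠ Set.univ := fun hcover => by
    obtain ⟨j, hj⟩ := Subspace.exists_eq_top_of_iUnion_eq_univ hcover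
    exact hp j fun v hv => by simpa using (Submodule.eq_top_iff'.1 hj) ⟨v, hv⟩
  obtain ⟨⟨v, hvK⟩, hv⟩ := Set.ne_univ_iff_exists_notMem _ |>.1 hcover
  simp only [Set.mem_iUnion, not_exists, SetLike.mem_coe, Submodule.mem_comap] at hv
  exact ⟨v, hvK, hv⟩

theorem exists_inner_eq_zero_forall_inner_ne_zero {E ι : Type*} [NormedAddCommGroup E]
    [InnerProductSpace ℝ E] [Finite ι] {x : ι → E} {i : ι} (hx : ∀ j ≠ i, x j ∉ ℝ ∙ x i) :
    ∃ v, ⟪v, x i⟫ = 0 ∧ ∀ j ≠ i, ⟪v, x j⟫ ≠ 0 := by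
  have hle (j : {j // j ≠ i}) : ¬(ℝ ∙ x i)ᗮ ≤ (ℝ ∙ x j)ᗮ := by
    rw [Submodule.orthogonal_le_orthogonal_iff, Submodule.span_singleton_le_iff_mem]
    exact hx j j.2
  obtain ⟨v, hvi, hvj⟩ := Submodule.exists_mem_forall_notMem_of_forall_not_le hle
  simp only [Submodule.mem_orthogonal_singleton_iff_inner_left] at hvi hvj
  exact ⟨v, hvi, fun j hj => hvj ⟨j, hj⟩⟩

theorem sum_mul_abs_inner_eq_zero {E ι : Type*} [NormedAddCommGroup E] [InnerProductSpace ℝ E]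
    [Fintype ι] {x : ι → E} {c : ι → ℝ}
    (h : ∀ v : E, v ≠ 0 → ∑ i, c i * max (⟪v, x i⟫ / ‖v‖) 0 = 0) (v : E) :
    ∑ i, c i * |⟪v, x i⟫| = 0 := by
  rcases eq_or_ne v 0 with rfl | hv
  · simp
  have hsum := congr_arg₂ (· + ·) (h v hv) (h (-v) (neg_ne_zero.2 hv))
  simp only [← sum_add_distrib, ← mul_add, inner_neg_left, norm_neg, neg_div,
    max_zero_add_max_neg_zero_eq_abs_self, abs_div, abs_norm, mul_div_assoc', ← sum_div,
    add_zero] at hsum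
  exact (div_eq_zero_iff.1 hsum).resolve_right (norm_ne_zero_iff.2 hv)

theorem abs_add_add_abs_sub_eq_of_abs_le {a s : ℝ} (h : |s| ≤ |a|) :
    |a + s| + |a - s| = 2 * |a| := by
  obtain ⟨hs₁, hs₂⟩ := abs_le.1 h
  rcases le_total 0 a with ha | ha
  · rw [abs_of_nonneg ha] at *
    rw [abs_of_nonneg (by linarith), abs_of_nonneg (by linarith)]
    ring
  · rw [abs_of_nonpos ha] at *
    rw [abs_of_nonpos (by linarith), abs_of_nonpos (by linarith)]
    ring

theorem eq_zero_of_sum_mul_abs_add_mul_eq_zero {ι : Type*} [Fintype ι] {a b c : ι → ℝ} {i : ι}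
    (hai : a i = 0) (hbi : b i ≠ 0) (ha : ∀ j ≠ i, a j ≠ 0)
    (h : ∀ t, ∑ j, c j * |a j + t * b j| = 0) : c i = 0 := by
  have hsmall : ∀ᶠ t in 𝓝[>] (0 : ℝ), 0 < t ∧ ∀ j ≠ i, |t * b j| ≤ |a j| := by
    refine eventually_mem_nhdsWithin.and (eventually_all.2 fun j => ?_)
    rcases eq_or_ne j i with rfl | hj
    · exact .of_forall fun _ hj => absurd rfl hj
    have hlim : Tendsto (fun t : ℝ => |t * b j|) (𝓝[>] 0) (𝓝 0) := by
      simpa using ((continuous_id.mul continuous_const).abs.tendsto (0 : ℝ)).mono_left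
        nhdsWithin_le_nhds
    exact (hlim.eventually_lt_const (abs_pos.2 (ha j hj))).mono fun _ ht _ => ht.le
  obtain ⟨t, ht, hts⟩ := hsmall.exists
  -- The second difference at `0` sees only the kink of the `i`-th term.
  have hdiff : ∑ j, c j * (|a j + t * b j| + |a j - t * b j| - 2 * |a j|) = 0 :=
    calc _ = ∑ j, c j * |a j + t * b j| + ∑ j, c j * |a j + -t * b j|
          - 2 * ∑ j, c j * |a j + 0 * b j| := by
          rw [mul_sum, ← sum_add_distrib, ← sum_sub_distrib]
          refine sum_congr rfl fun j _ => ?_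
          rw [neg_mul, ← sub_eq_add_neg, zero_mul, add_zero]
          ring
      _ = 0 := by rw [h, h, h]; ring
  rw [sum_eq_single i (fun j _ hj => by rw [abs_add_add_abs_sub_eq_of_abs_le (hts j hj), sub_self,
    mul_zero]) (by simp)] at hdiff
  simp only [hai, zero_add, zero_sub, abs_neg, abs_zero, mul_zero, sub_zero] at hdiff
  exact (mul_eq_zero.1 hdiff).resolve_right (by positivity)

theorem theta_linearly_independent_general {d n : ℕ}
    (x : Fin n → EuclideanSpace ℝ (Fin d))
    (hx : ∀ i, x i ≠ 0)
    (hpar : ∀ i j, i ≠ j → ∀ β : ℝ, β ≠ 0 → x i ≠ β • x j)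
    (c : Fin n → ℝ)
    (hzero : ∀ v : EuclideanSpace ℝ (Fin d), v ≠ 0 →
      ∑ i : Fin n, c i * max (⟪v, x i⟫ / ‖v‖) 0 = 0) :
    ∀ i, c i = 0 := by
  intro i
  have hspan : ∀ j ≠ i, x j ∉ ℝ ∙ x i := by
    intro j hj hmem
    obtain ⟨β, hβ⟩ := Submodule.mem_span_singleton.1 hmem
    rcases eq_or_ne β 0 with rfl | hβ0
    · exact hx j (by rw [← hβ, zero_smul])
    · exact hpar j i hj β hβ0 hβ.symm
  obtain ⟨v, hvi, hvj⟩ := exists_inner_eq_zero_forall_inner_ne_zero hspan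
  refine eq_zero_of_sum_mul_abs_add_mul_eq_zero (b := fun j => ⟪x i, x j⟫) hvi
    (inner_self_ne_zero.2 (hx i)) hvj fun t => ?_
  simpa only [inner_add_left, real_inner_smul_left] using
    sum_mul_abs_inner_eq_zero hzero (v + t • x i)

/-- Linear independence of the functionals `θ_i(v) = σ(⟨v, x_i⟩/‖v‖)` (with `σ` the ReLU)
for nonzero, pairwise non-parallel data points: if a linear combination vanishes for all
`v ≠ 0`, all coefficients are zero. -/
theorem theta_linearly_independent {d n : ℕ} (hd : 2 ≤ d)
    (x : Fin n → EuclideanSpace ℝ (Fin d))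
    (hx : ∀ i, x i ≠ 0)
    (hpar : ∀ i j, i ≠ j → ∀ β : ℝ, β ≠ 0 → x i ≠ β • x j)
    (c : Fin n → ℝ)
    (hzero : ∀ v : EuclideanSpace ℝ (Fin d), v ≠ 0 →
      ∑ i : Fin n, c i * max (⟪v, x i⟫ / ‖v‖) 0 = 0) :
    ∀ i, c i = 0 :=
  theta_linearly_independent_general x hx hpar c hzero
end

section
/- Let Λ be a symmetric positive semidefinite n×n matrix with λ_min(Λ) ≥ ω/2 for some ω > 0, let e ∈ R^n, η > 0 with η ≤ 1/(3||Λ||₂), and let r ∈ R^n satisfy ||r||₂ ≤ c·ω·||e||₂ for a sufficiently small absolute constant c > 0 (c ≤ 1/32 suffices). If e' = e − ηΛe + ηr, then ||e'||₂² ≤ (1 − ηω/2)||e||₂². -/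
local notation "⟪" x ", " y "⟫" => @inner ℝ _ _ x y

/-!
For a positive operator `T`, Cauchy–Schwarz for the semi-inner product `⟪x, T y⟫` at `x` and
`T x` gives `‖T x‖² ≤ ‖T‖ ⟪x, T x⟫`. With `η ‖Λ‖ ≤ 1/3` the pure gradient step therefore satisfies
`‖e - η Λ e‖² ≤ ‖e‖² - (5/3) η ⟪e, Λ e⟫ ≤ (1 - 5ηω/6) ‖e‖²`. The residual `η r` has norm at most
`ηω ‖e‖ / 32`, so it adds at most `(ηω/16 + (ηω)²/1024) ‖e‖²`, which the margin `ηω/3` absorbs.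
-/

namespace ContinuousLinearMap

variable {E : Type*} [NormedAddCommGroup E] [InnerProductSpace ℝ E] {T : E →L[ℝ] E}

theorem IsPositive.norm_apply_sq_le (hT : T.IsPositive) (x : E) :
    ‖T x‖ ^ 2 ≤ ‖T‖ * ⟪x, T x⟫ := by
  have hTT : ⟪x, T (T x)⟫ = ‖T x‖ ^ 2 := by
    rw [← hT.inner_left_eq_inner_right, real_inner_self_eq_norm_sq]
  have hcs := LinearMap.BilinForm.apply_mul_apply_le_of_forall_zero_le
    ((innerₗ E).compl₂ (T : E →ₗ[ℝ] E)) hT.inner_nonneg_right x (T x)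
  simp only [LinearMap.compl₂_apply, innerₗ_apply_apply, coe_coe, hTT,
    real_inner_self_eq_norm_sq] at hcs
  have hTTx : ⟪T x, T (T x)⟫ ≤ ‖T‖ * ‖T x‖ ^ 2 :=
    calc ⟪T x, T (T x)⟫ ≤ ‖T x‖ * ‖T (T x)‖ := real_inner_le_norm _ _
      _ ≤ ‖T x‖ * (‖T‖ * ‖T x‖) := by gcongr; exact le_opNorm T (T x)
      _ = ‖T‖ * ‖T x‖ ^ 2 := by ring
  rcases (sq_nonneg ‖T x‖).eq_or_lt with h0 | hpos
  · rw [← h0]; exact mul_nonneg (norm_nonneg T) (hT.inner_nonneg_right x)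
  · nlinarith [hT.inner_nonneg_right x]

theorem IsPositive.norm_sub_smul_apply_sq_le (hT : T.IsPositive) (η : ℝ) (x : E) :
    ‖x - η • T x‖ ^ 2 ≤ ‖x‖ ^ 2 - η * (2 - η * ‖T‖) * ⟪x, T x⟫ := by
  rw [norm_sub_sq_real, real_inner_smul_right, norm_smul, mul_pow, Real.norm_eq_abs, sq_abs]
  nlinarith [mul_le_mul_of_nonneg_left (hT.norm_apply_sq_le x) (sq_nonneg η)]

end ContinuousLinearMap

theorem norm_add_sq_le_of_norm_le {F : Type*} [SeminormedAddCommGroup F] {a b : F} {R β : ℝ}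
    (ha : ‖a‖ ≤ R) (hb : ‖b‖ ≤ β * R) :
    ‖a + b‖ ^ 2 ≤ ‖a‖ ^ 2 + (2 * β + β ^ 2) * R ^ 2 := by
  have hbR : 0 ≤ β * R := (norm_nonneg b).trans hb
  calc ‖a + b‖ ^ 2 ≤ (‖a‖ + ‖b‖) ^ 2 := by gcongr; exact norm_add_le a b
    _ ≤ ‖a‖ ^ 2 + (2 * β + β ^ 2) * R ^ 2 := by
      nlinarith [mul_le_mul ha hb (norm_nonneg b) ((norm_nonneg a).trans ha),
        mul_le_mul hb hb (norm_nonneg b) hbR]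

/-- One-step contraction for weight-normalized gradient descent: if `Λ` is symmetric
PSD with `λ_min(Λ) ≥ ω/2`, the step size satisfies `η‖Λ‖ ≤ 1/3`, and the residual
satisfies `‖r‖ ≤ (1/32) ω ‖e‖`, then the updated error `e' = e - ηΛe + ηr` satisfies
`‖e'‖² ≤ (1 - ηω/2)‖e‖²`. -/
theorem one_step_contraction {n : ℕ} (ω η : ℝ) (hω : 0 < ω) (hη : 0 < η)
    (Λ : EuclideanSpace ℝ (Fin n) →L[ℝ] EuclideanSpace ℝ (Fin n))
    (hsymm : ∀ x z, ⟪Λ x, z⟫ = ⟪x, Λ z⟫)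
    (hmin : ∀ x, (ω / 2) * ‖x‖ ^ 2 ≤ ⟪x, Λ x⟫)
    (hstep : ∀ x, ‖Λ x‖ ≤ (3 * η)⁻¹ * ‖x‖)
    (e r : EuclideanSpace ℝ (Fin n))
    (hres : ‖r‖ ≤ (1 / 32) * ω * ‖e‖) :
    ‖e - η • Λ e + η • r‖ ^ 2 ≤ (1 - η * ω / 2) * ‖e‖ ^ 2 := by
  have hΛ : Λ.IsPositive := (Λ.isPositive_iff).2
    ⟨hsymm, fun x => (hsymm x x).symm ▸ (hmin x).trans' (by positivity)⟩
  have hηΛ : η * ‖Λ‖ ≤ 1 / 3 := by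
    calc η * ‖Λ‖ ≤ η * (3 * η)⁻¹ := by gcongr; exact Λ.opNorm_le_bound (by positivity) hstep
      _ = 1 / 3 := by field_simp
  have hgrad : ‖e - η • Λ e‖ ^ 2 ≤ (1 - 5 / 6 * (η * ω)) * ‖e‖ ^ 2 := by
    calc ‖e - η • Λ e‖ ^ 2 ≤ ‖e‖ ^ 2 - η * (2 - η * ‖Λ‖) * ⟪e, Λ e⟫ :=
          hΛ.norm_sub_smul_apply_sq_le η e
      _ ≤ ‖e‖ ^ 2 - η * (2 - η * ‖Λ‖) * (ω / 2 * ‖e‖ ^ 2) := by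
          gcongr
          · exact mul_nonneg hη.le (by linarith)
          · exact hmin e
      _ ≤ (1 - 5 / 6 * (η * ω)) * ‖e‖ ^ 2 := by
          nlinarith [mul_nonneg (sub_nonneg.2 hηΛ) (mul_nonneg (mul_pos hη hω).le (sq_nonneg ‖e‖))]
  have hsmall : ‖e - η • Λ e‖ ≤ ‖e‖ := by
    refine pow_le_pow_iff_left₀ (norm_nonneg _) (norm_nonneg _) two_ne_zero |>.1 ?_
    nlinarith [mul_nonneg (mul_pos hη hω).le (sq_nonneg ‖e‖)]
  have hηr : ‖η • r‖ ≤ η * ω / 32 * ‖e‖ := by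
    rw [norm_smul, Real.norm_of_nonneg hη.le]
    nlinarith
  have hsplit := norm_add_sq_le_of_norm_le hsmall hηr
  -- `0 ≤ (1 - 5ηω/6) ‖e‖²` is what bounds the `(ηω)²` term
  nlinarith [mul_nonneg (mul_pos hη hω).le (sq_nonneg ‖e‖),
    mul_nonneg (mul_pos hη hω).le ((sq_nonneg _).trans hgrad)]
end
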